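/- Let X be a standard Borel space, let p, q, m, n be probability measures on X, and let s be a coupling of p and q, t a coupling of q and m, and u a coupling of m and n. Then composition of couplings is associative: (u ∘ t) ∘ s = u ∘ (t ∘ s) as measures on X × X. -/

import Mathlib

/-!
Disintegrating `s` along its first coordinate absorbs the backward kernel `s⃖` of the definition:
`t ∘ s = s.fst ⊗ₘ (t⃗ ∘ₖ s⃗)`. So the forward kernel of `t ∘ s` is `t⃗ ∘ₖ s⃗` almost everywhere, and
both sides of the associativity law become `s.fst ⊗ₘ (u⃗ ∘ₖ t⃗ ∘ₖ s⃗)` by associativity of kernel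
composition.
-/

open MeasureTheory ProbabilityTheory

variable {X : Type*} [MeasurableSpace X] [StandardBorelSpace X] [Nonempty X]

/-- The composite `t ∘ s` of couplings: push `q ⊗ (s⃖ ×ₖ t⃗)` onto the outer two coordinates,
where `q = s.snd` is the middle measure. -/
noncomputable def coupComp (t s : Measure (X × X)) [IsFiniteMeasure s] [IsFiniteMeasure t] :
    Measure (X × X) :=
  (s.snd.compProd ((s.map Prod.swap).condKernel ×ₖ t.condKernel)).map Prod.snd

instance coupComp.instIsFiniteMeasure (t s : Measure (X × X))
    [IsFiniteMeasure s] [IsFiniteMeasure t] : IsFiniteMeasure (coupComp t s) := by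
  unfold coupComp; infer_instance

lemma ProbabilityTheory.Kernel.comp_ae_eq_of_ae_eq {α β γ : Type*} {mα : MeasurableSpace α}
    {mβ : MeasurableSpace β} {mγ : MeasurableSpace γ} {μ : Measure α} {κ : Kernel α β}
    {η η' : Kernel β γ} (h : η =ᵐ[κ ∘ₘ μ] η') : η ∘ₖ κ =ᵐ[μ] η' ∘ₖ κ := by
  filter_upwards [Measure.ae_ae_of_ae_comp h] with x hx
  simp_rw [Kernel.comp_apply]
  exact Measure.bind_congr_right hx

lemma coupComp_apply_prod (t s : Measure (X × X)) [IsFiniteMeasure s] [IsFiniteMeasure t]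
    {A C : Set X} (hA : MeasurableSet A) (hC : MeasurableSet C) :
    coupComp t s (A ×ˢ C) = ∫⁻ w in A ×ˢ .univ, t.condKernel w.2 C ∂s := by
  have hf : Measurable fun w : X × X ↦ t.condKernel w.1 C :=
    (Kernel.measurable_coe _ hC).comp measurable_fst
  calc coupComp t s (A ×ˢ C)
      = ∫⁻ y, (s.map Prod.swap).condKernel y A * t.condKernel y C ∂s.snd := by
        rw [coupComp, Measure.map_apply measurable_snd (hA.prod hC), ← Set.univ_prod,
          Measure.compProd_apply_prod .univ (hA.prod hC), Measure.restrict_univ]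
        simp_rw [Kernel.prod_apply_prod]
    _ = ∫⁻ w in .univ ×ˢ A, t.condKernel w.1 C ∂s.map Prod.swap := by
        rw [← Measure.setLIntegral_condKernel_univ_left hf hA, Measure.fst_map_swap]
        simp_rw [setLIntegral_const, mul_comm]
    _ = ∫⁻ w in A ×ˢ .univ, t.condKernel w.2 C ∂s := by
        rw [setLIntegral_map (MeasurableSet.univ.prod hA) hf measurable_swap,
          Set.preimage_swap_prod]
        rfl

lemma coupComp_eq_compProd (t s : Measure (X × X)) [IsFiniteMeasure s] [IsFiniteMeasure t] :
    coupComp t s = s.fst ⊗ₘ (t.condKernel ∘ₖ s.condKernel) := by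
  refine Measure.ext_prod fun {A C} hA hC ↦ ?_
  have hf : Measurable fun w : X × X ↦ t.condKernel w.2 C :=
    (Kernel.measurable_coe _ hC).comp measurable_snd
  rw [coupComp_apply_prod t s hA hC, Measure.compProd_apply_prod hA hC,
    ← Measure.setLIntegral_condKernel_univ_right hf hA]
  simp_rw [Kernel.comp_apply' _ _ _ hC]

lemma fst_coupComp (t s : Measure (X × X)) [IsFiniteMeasure s] [IsFiniteMeasure t] :
    (coupComp t s).fst = s.fst := by
  rw [coupComp_eq_compProd, Measure.fst_compProd]

lemma condKernel_coupComp (t s : Measure (X × X)) [IsFiniteMeasure s] [IsFiniteMeasure t] :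
    (coupComp t s).condKernel =ᵐ[s.fst] t.condKernel ∘ₖ s.condKernel := by
  convert condKernel_compProd s.fst (t.condKernel ∘ₖ s.condKernel) using 3
  exact coupComp_eq_compProd t s

theorem coupComp_assoc_general (q : Measure X)
    (s t u : Measure (X × X))
    [IsProbabilityMeasure s] [IsProbabilityMeasure t] [IsProbabilityMeasure u]
    (hs2 : s.snd = q) (ht1 : t.fst = q) :
    coupComp (coupComp u t) s = coupComp u (coupComp t s) := by
  have hmid : s.condKernel ∘ₘ s.fst = t.fst := by
    rw [← Measure.snd_compProd, s.disintegrate, hs2, ht1]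
  calc coupComp (coupComp u t) s
      = s.fst ⊗ₘ ((coupComp u t).condKernel ∘ₖ s.condKernel) := coupComp_eq_compProd _ _
    _ = s.fst ⊗ₘ (u.condKernel ∘ₖ (t.condKernel ∘ₖ s.condKernel)) := by
        rw [← Kernel.comp_assoc]
        refine Measure.compProd_congr (Kernel.comp_ae_eq_of_ae_eq ?_)
        rw [hmid]
        exact condKernel_coupComp u t
    _ = (coupComp t s).fst ⊗ₘ (u.condKernel ∘ₖ (coupComp t s).condKernel) := by
        rw [fst_coupComp]
        refine Measure.compProd_congr ((condKernel_coupComp t s).mono fun x hx ↦ ?_)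
        rw [Kernel.comp_apply u.condKernel (coupComp t s).condKernel, hx, Kernel.comp_apply]
    _ = coupComp u (coupComp t s) := (coupComp_eq_compProd _ _).symm

/-- Composition of couplings is associative: `(u ∘ t) ∘ s = u ∘ (t ∘ s)`. -/
theorem coupComp_assoc (p q m n : Measure X)
    [IsProbabilityMeasure p] [IsProbabilityMeasure q]
    [IsProbabilityMeasure m] [IsProbabilityMeasure n]
    (s t u : Measure (X × X))
    [IsProbabilityMeasure s] [IsProbabilityMeasure t] [IsProbabilityMeasure u]
    (hs1 : s.fst = p) (hs2 : s.snd = q) (ht1 : t.fst = q) (ht2 : t.snd = m)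
    (hu1 : u.fst = m) (hu2 : u.snd = n) :
    coupComp (coupComp u t) s = coupComp u (coupComp t s) :=
  coupComp_assoc_general q s t u hs2 ht1
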